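/- Let {x^k} satisfy for all k and all x ∈ ℝⁿ the inequality ‖x^{k+1} − B_μ(x^k)‖₂² + λμ Σᵢ |x^{k+1}ᵢ|/(|x^kᵢ| + εᵢ)^{1−p} ≤ ‖x − B_μ(x^k)‖₂² + λμ Σᵢ |xᵢ|/(|x^kᵢ| + εᵢ)^{1−p}, where B_μ(y) = y + μAᵀ(b − Ay). If a subsequence x^{k_j} → x* and x^{k_j+1} → x*, then x* satisfies ‖x* − B_μ(x*)‖₂² + λμ Σᵢ |xᵢ*|/(|xᵢ*| + εᵢ)^{1−p} ≤ ‖x − B_μ(x*)‖₂² + λμ Σᵢ |xᵢ|/(|xᵢ*| + εᵢ)^{1−p} for all x ∈ ℝⁿ; hence x* is a fixed point of the thresholding map: xᵢ* = sign([B_μ(x*)]ᵢ)·max{|[B_μ(x*)]ᵢ| − λμ/(2(|xᵢ*| + εᵢ)^{1−p}), 0}. -/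

import Mathlib

open Filter Topology

/-! The iteration inequality says that `X (k + 1)` minimizes `G (X k) ·`, where
`G y x = ‖x - B y‖² + λμ ∑ᵢ |xᵢ| / (|yᵢ| + εᵢ) ^ (1 - p)`. Since every `εᵢ > 0`, `G` is jointly
continuous, so the inequality passes to the limit along the subsequence: `x*` minimizes `G x* ·`.
This objective is separable, so each `x*ᵢ` minimizes the strictly convex scalar function
`(t - cᵢ)² + wᵢ |t|`, whose unique minimizer is the soft threshold of `cᵢ` at level `wᵢ / 2`. -/

noncomputable def softThreshold (w c : ℝ) : ℝ := Real.sign c * max (|c| - w / 2) 0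

lemma sq_add_abs_softThreshold_le {w : ℝ} (hw : 0 ≤ w) (c t : ℝ) :
    (softThreshold w c - c) ^ 2 + w * |softThreshold w c| ≤ (t - c) ^ 2 + w * |t| := by
  rcases le_total |c| (w / 2) with hsmall | hlarge
  · have h0 : softThreshold w c = 0 := by
      rw [softThreshold, max_eq_right (by linarith), mul_zero]
    rw [h0, abs_zero]
    nlinarith [sq_nonneg t, le_abs_self (t * c), abs_mul t c,
      mul_nonneg (abs_nonneg t) (by linarith : 0 ≤ w - 2 * |c|)]
  · rcases lt_trichotomy c 0 with hc | hc | hc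
    · have hval : softThreshold w c = c + w / 2 := by
        rw [softThreshold, Real.sign_of_neg hc, abs_of_neg hc,
          max_eq_left (by linarith [abs_of_neg hc])]
        ring
      rw [hval, abs_of_nonpos (by linarith [abs_of_neg hc])]
      nlinarith [neg_abs_le t, sq_nonneg (t - c - w / 2)]
    · subst hc
      simp only [abs_zero] at hlarge
      have : w = 0 := by linarith
      subst this
      simp [softThreshold, sq_nonneg]
    · have hval : softThreshold w c = c - w / 2 := by
        rw [softThreshold, Real.sign_of_pos hc, abs_of_pos hc,
          max_eq_left (by linarith [abs_of_pos hc])]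
        ring
      rw [hval, abs_of_nonneg (by linarith [abs_of_pos hc])]
      nlinarith [le_abs_self t, sq_nonneg (t - c + w / 2)]

lemma eq_of_minimizes_sq_add_abs {w c s s' : ℝ} (hw : 0 ≤ w)
    (hs : ∀ t, (s - c) ^ 2 + w * |s| ≤ (t - c) ^ 2 + w * |t|)
    (hs' : ∀ t, (s' - c) ^ 2 + w * |s'| ≤ (t - c) ^ 2 + w * |t|) : s = s' := by
  -- strict convexity: the midpoint would otherwise do strictly better
  have hmid := hs ((s + s') / 2)
  have habs : |(s + s') / 2| ≤ (|s| + |s'|) / 2 := by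
    rw [abs_div, abs_two]
    exact div_le_div_of_nonneg_right (abs_add_le s s') zero_le_two
  have := hs' s
  nlinarith [mul_le_mul_of_nonneg_left habs hw]

lemma apply_le_of_forall_sum_le {ι : Type*} [Fintype ι] [DecidableEq ι] {F : ι → ℝ → ℝ}
    {v : ι → ℝ} (h : ∀ x : ι → ℝ, ∑ j, F j (v j) ≤ ∑ j, F j (x j)) (i : ι) (t : ℝ) :
    F i (v i) ≤ F i t := by
  have := h (Function.update v i t)
  simp only [Function.apply_update (fun j => F j) v i t,
    Finset.sum_update_of_mem (Finset.mem_univ i),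
    Finset.sum_eq_add_sum_sdiff_singleton_of_mem (Finset.mem_univ i) (fun j => F j (v j))] at this
  linarith

lemma coord_le_of_forall_norm_sq_add_weighted_abs_le {ι : Type*} [Fintype ι]
    {c v : EuclideanSpace ℝ ι} {w : ι → ℝ}
    (h : ∀ x : EuclideanSpace ℝ ι,
      ‖v - c‖ ^ 2 + ∑ j, w j * |v j| ≤ ‖x - c‖ ^ 2 + ∑ j, w j * |x j|) (i : ι) (t : ℝ) :
    (v i - c i) ^ 2 + w i * |v i| ≤ (t - c i) ^ 2 + w i * |t| := by
  classical
  refine apply_le_of_forall_sum_le (F := fun j s => (s - c j) ^ 2 + w j * |s|) (fun x => ?_) i t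
  simpa only [EuclideanSpace.real_norm_sq_eq, PiLp.sub_apply, ← Finset.sum_add_distrib]
    using h (WithLp.toLp 2 x)

lemma le_of_tendsto_of_forall_le_succ {α β : Type*} [TopologicalSpace α] [TopologicalSpace β]
    [Preorder β] [OrderClosedTopology β] {G : α → α → β} (hG : Continuous (Function.uncurry G))
    {X : ℕ → α} (hX : ∀ k x, G (X k) (X (k + 1)) ≤ G (X k) x) {φ : ℕ → ℕ} {a : α}
    (h₀ : Tendsto (fun j => X (φ j)) atTop (𝓝 a)) (h₁ : Tendsto (fun j => X (φ j + 1)) atTop (𝓝 a))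
    (x : α) : G a a ≤ G a x :=
  le_of_tendsto_of_tendsto' ((hG.tendsto (a, a)).comp (h₀.prodMk_nhds h₁))
    ((hG.tendsto (a, x)).comp (h₀.prodMk_nhds tendsto_const_nhds)) fun j => hX (φ j) x

noncomputable def reweightedObjective {ι : Type*} [Fintype ι]
    (B : EuclideanSpace ℝ ι → EuclideanSpace ℝ ι) (κ p : ℝ) (ε : ι → ℝ)
    (y x : EuclideanSpace ℝ ι) : ℝ :=
  ‖x - B y‖ ^ 2 + κ * ∑ i, |x i| / (|y i| + ε i) ^ (1 - p)

lemma continuous_uncurry_reweightedObjective {ι : Type*} [Fintype ι]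
    {B : EuclideanSpace ℝ ι → EuclideanSpace ℝ ι} (hB : Continuous B) (κ p : ℝ) {ε : ι → ℝ}
    (hε : ∀ i, 0 < ε i) : Continuous (Function.uncurry (reweightedObjective B κ p ε)) := by
  have hpos : ∀ (y : EuclideanSpace ℝ ι) i, 0 < |y i| + ε i := fun y i => by
    positivity [hε i]
  refine ((continuous_snd.sub (hB.comp continuous_fst)).norm.pow 2).add
    (continuous_const.mul (continuous_finsetSum _ fun i _ => ?_))
  refine Continuous.div (by fun_prop) ?_ fun q => (Real.rpow_pos_of_pos (hpos q.1 i) _).ne'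
  exact Continuous.rpow_const (by fun_prop) fun q => Or.inl (hpos q.1 i).ne'

theorem limit_point_is_fixed_point_general (m n : ℕ)
    (A : EuclideanSpace ℝ (Fin n) →L[ℝ] EuclideanSpace ℝ (Fin m))
    (b : EuclideanSpace ℝ (Fin m)) (lam μ p : ℝ) (ε : Fin n → ℝ)
    (hlam : 0 < lam) (hμ : 0 < μ)
    (hε : ∀ i, 0 < ε i)
    (B : EuclideanSpace ℝ (Fin n) → EuclideanSpace ℝ (Fin n))
    (hB : ∀ y, B y = y + μ • (ContinuousLinearMap.adjoint A) (b - A y))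
    (X : ℕ → EuclideanSpace ℝ (Fin n))
    (hIter : ∀ k, ∀ x : EuclideanSpace ℝ (Fin n),
      ‖X (k + 1) - B (X k)‖ ^ 2
          + lam * μ * ∑ i, |X (k + 1) i| / (|X k i| + ε i) ^ (1 - p)
        ≤ ‖x - B (X k)‖ ^ 2 + lam * μ * ∑ i, |x i| / (|X k i| + ε i) ^ (1 - p))
    (φ : ℕ → ℕ)
    (xstar : EuclideanSpace ℝ (Fin n))
    (hsub : Tendsto (fun j => X (φ j)) atTop (nhds xstar))
    (hsub' : Tendsto (fun j => X (φ j + 1)) atTop (nhds xstar)) :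
    (∀ x : EuclideanSpace ℝ (Fin n),
      ‖xstar - B xstar‖ ^ 2
          + lam * μ * ∑ i, |xstar i| / (|xstar i| + ε i) ^ (1 - p)
        ≤ ‖x - B xstar‖ ^ 2 + lam * μ * ∑ i, |x i| / (|xstar i| + ε i) ^ (1 - p)) ∧
    ∀ i, xstar i = Real.sign (B xstar i) *
      max (|B xstar i| - lam * μ / (2 * (|xstar i| + ε i) ^ (1 - p))) 0 := by
  have hBc : Continuous B := by
    rw [show B = _ from funext hB]
    fun_prop
  have hmin : ∀ x, reweightedObjective B (lam * μ) p ε xstar xstar ≤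
      reweightedObjective B (lam * μ) p ε xstar x :=
    le_of_tendsto_of_forall_le_succ (continuous_uncurry_reweightedObjective hBc _ p hε)
      hIter hsub hsub'
  refine ⟨hmin, fun i => ?_⟩
  set w : Fin n → ℝ := fun j => lam * μ / (|xstar j| + ε j) ^ (1 - p)
  have hw : 0 ≤ w i := by
    have := hε i
    positivity
  have hweighted : ∀ x : EuclideanSpace ℝ (Fin n),
      lam * μ * ∑ j, |x j| / (|xstar j| + ε j) ^ (1 - p) = ∑ j, w j * |x j| := fun x => by
    rw [Finset.mul_sum]
    exact Finset.sum_congr rfl fun j _ => by ring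
  have hcoord := coord_le_of_forall_norm_sq_add_weighted_abs_le (c := B xstar) (w := w)
    (fun x => by simpa only [reweightedObjective, hweighted] using hmin x) i
  refine (eq_of_minimizes_sq_add_abs hw hcoord (sq_add_abs_softThreshold_le hw _)).trans ?_
  rw [softThreshold, div_div, mul_comm _ (2 : ℝ)]

/-- Limit points of the IT iteration are fixed points of the thresholding map. -/
theorem limit_point_is_fixed_point (m n : ℕ)
    (A : EuclideanSpace ℝ (Fin n) →L[ℝ] EuclideanSpace ℝ (Fin m))
    (b : EuclideanSpace ℝ (Fin m)) (lam μ p : ℝ) (ε : Fin n → ℝ)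
    (hlam : 0 < lam) (hμ : 0 < μ) (hp : 0 < p) (hp1 : p < 1)
    (hε : ∀ i, 0 < ε i)
    (B : EuclideanSpace ℝ (Fin n) → EuclideanSpace ℝ (Fin n))
    (hB : ∀ y, B y = y + μ • (ContinuousLinearMap.adjoint A) (b - A y))
    (X : ℕ → EuclideanSpace ℝ (Fin n))
    (hIter : ∀ k, ∀ x : EuclideanSpace ℝ (Fin n),
      ‖X (k + 1) - B (X k)‖ ^ 2
          + lam * μ * ∑ i, |X (k + 1) i| / (|X k i| + ε i) ^ (1 - p)
        ≤ ‖x - B (X k)‖ ^ 2 + lam * μ * ∑ i, |x i| / (|X k i| + ε i) ^ (1 - p))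
    (φ : ℕ → ℕ) (hφ : StrictMono φ)
    (xstar : EuclideanSpace ℝ (Fin n))
    (hsub : Tendsto (fun j => X (φ j)) atTop (nhds xstar))
    (hsub' : Tendsto (fun j => X (φ j + 1)) atTop (nhds xstar)) :
    (∀ x : EuclideanSpace ℝ (Fin n),
      ‖xstar - B xstar‖ ^ 2
          + lam * μ * ∑ i, |xstar i| / (|xstar i| + ε i) ^ (1 - p)
        ≤ ‖x - B xstar‖ ^ 2 + lam * μ * ∑ i, |x i| / (|xstar i| + ε i) ^ (1 - p)) ∧
    ∀ i, xstar i = Real.sign (B xstar i) *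
      max (|B xstar i| - lam * μ / (2 * (|xstar i| + ε i) ^ (1 - p))) 0 :=
  limit_point_is_fixed_point_general m n A b lam μ p ε hlam hμ hε B hB X hIter φ xstar hsub hsub'
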